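/- (Theorem 2, aggregate form.) Let ε > 0, T_Δ a positive natural number, M a natural number, ω_Q, ω_q ≥ 0, and α₀, β₀ > 0. Let S₁, S₂, S₃ be finite index sets each of cardinality at most M. For each j ∈ S₁ suppose given α_j ≥ α₀, P_j > 0, and reals c_j, ĉ_j with |c_j − ĉ_j| ≤ T_Δ·(ω_Q + ω_q); define p_j(c) := min(max(ε·c/(2·α_j), 0), P_j) and F_j(p, c) := (α_j/ε)·p² − c·p. For each j ∈ S₂ suppose given β_j ≥ β₀, L_j > 0, and reals c_j, ĉ_j with |c_j − ĉ_j| ≤ 2·T_Δ·ω_Q; define u_j(c) := min(max(ε·c/(2·β_j), 0), L_j) and G_j(u, c) := (β_j/ε)·u² − c·u. For each j ∈ S₃ suppose given β_j ≥ β₀, L_j > 0, and reals c_j, ĉ_j with |c_j − ĉ_j| ≤ T_Δ·(ω_Q + ω_q); define v_j and H_j analogously to u_j and G_j. Then |∑_{j∈S₁} F_j(p_j(ĉ_j), c_j) + ∑_{j∈S₂} G_j(u_j(ĉ_j), c_j) + ∑_{j∈S₃} H_j(v_j(ĉ_j), c_j) − ∑_{j∈S₁} F_j(p_j(c_j), c_j)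 − ∑_{j∈S₂} G_j(u_j(c_j), c_j) − ∑_{j∈S₃} H_j(v_j(c_j), c_j)| ≤ ε·T_Δ²·M·[(1/(2·α₀) + 1/(2·β₀))·(ω_Q + ω_q)² + (2/β₀)·ω_Q²]. -/

import Mathlib

/-!
Completing the square, `qpObjective price ε y c = (price/ε)·((y - m)² - m²)` with vertex
`m = ε·c/(2·price)`; so the clamp of `m` to `[0, cap]`, the point of the interval nearest to `m`,
minimizes the objective there, and it is `ε/(2·price)`-Lipschitz in `c`. With `x = x(c)` and
`x̂ = x(ĉ)` the loss splits as `F(x̂, c) - F(x, c) = (F(x̂, ĉ) - F(x, ĉ)) + (c - ĉ)·(x - x̂)`: the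
first bracket is `≤ 0` because `x̂` minimizes `F(·, ĉ)`, the second is `≤ ε·(c - ĉ)²/(2·price)`.
Summing over at most `M` terms of each kind gives the bound.
-/

/-- The quadratic queue-price objective `F(x, c) = (price/ε)·x² − c·x`. -/
noncomputable def qpObjective (price ε x c : ℝ) : ℝ := (price / ε) * x ^ 2 - c * x

/-- The clamped minimizer `x(c) = clamp(ε·c/(2·price); [0, cap])`. -/
noncomputable def qpMinimizer (price ε cap c : ℝ) : ℝ :=
  min (max (ε * c / (2 * price)) 0) cap

open Finset

theorem abs_min_max_sub_le {m y cap : ℝ} (hy₀ : 0 ≤ y) (hy : y ≤ cap) :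
    |min (max m 0) cap - m| ≤ |y - m| := by
  rcases le_total m 0 with hm | hm
  · rw [max_eq_right hm, min_eq_left (hy₀.trans hy), abs_of_nonneg (by linarith),
      abs_of_nonneg (by linarith)]
    linarith
  · rw [max_eq_left hm]
    rcases le_total m cap with hmc | hmc
    · simp [min_eq_left hmc]
    · rw [min_eq_right hmc, abs_of_nonpos (by linarith), abs_of_nonpos (by linarith)]
      linarith

theorem abs_min_max_sub_min_max_le (a b cap : ℝ) :
    |min (max a 0) cap - min (max b 0) cap| ≤ |a - b| := by
  calc |min (max a 0) cap - min (max b 0) cap|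
      ≤ max |max a 0 - max b 0| |cap - cap| := abs_min_sub_min_le_max _ _ _ _
    _ = |max a 0 - max b 0| := by rw [sub_self, abs_zero, max_eq_left (abs_nonneg _)]
    _ ≤ |a - b| := abs_max_sub_max_le_abs _ _ _

theorem qpMinimizer_mem_Icc (price ε c : ℝ) {cap : ℝ} (hcap : 0 ≤ cap) :
    qpMinimizer price ε cap c ∈ Set.Icc 0 cap :=
  ⟨le_min (le_max_right _ _) hcap, min_le_right _ _⟩

theorem qpObjective_eq_vertex_form {price ε : ℝ} (hprice : price ≠ 0) (hε : ε ≠ 0) (y c : ℝ) :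
    qpObjective price ε y c =
      price / ε * ((y - ε * c / (2 * price)) ^ 2 - (ε * c / (2 * price)) ^ 2) := by
  unfold qpObjective
  field_simp
  ring

theorem qpObjective_qpMinimizer_le {price ε cap c y : ℝ} (hprice : 0 < price) (hε : 0 < ε)
    (hy₀ : 0 ≤ y) (hy : y ≤ cap) :
    qpObjective price ε (qpMinimizer price ε cap c) c ≤ qpObjective price ε y c := by
  rw [qpObjective_eq_vertex_form hprice.ne' hε.ne', qpObjective_eq_vertex_form hprice.ne' hε.ne']
  have hnearest := sq_le_sq.mpr (abs_min_max_sub_le (m := ε * c / (2 * price)) hy₀ hy)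
  unfold qpMinimizer
  gcongr

theorem abs_qpMinimizer_sub_le {price ε : ℝ} (hprice : 0 ≤ price) (hε : 0 ≤ ε) (cap c c' : ℝ) :
    |qpMinimizer price ε cap c - qpMinimizer price ε cap c'| ≤ ε / (2 * price) * |c - c'| :=
  calc |qpMinimizer price ε cap c - qpMinimizer price ε cap c'|
      ≤ |ε * c / (2 * price) - ε * c' / (2 * price)| := abs_min_max_sub_min_max_le _ _ _
    _ = ε / (2 * price) * |c - c'| := by
      rw [← sub_div, ← mul_sub, mul_div_right_comm, abs_mul,
        abs_of_nonneg (by positivity : 0 ≤ ε / (2 * price))]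

theorem qpObjective_qpMinimizer_loss_le {price ε cap : ℝ} (hprice : 0 < price) (hε : 0 < ε)
    (hcap : 0 ≤ cap) (c chat : ℝ) :
    qpObjective price ε (qpMinimizer price ε cap chat) c
        - qpObjective price ε (qpMinimizer price ε cap c) c
      ≤ ε / (2 * price) * (c - chat) ^ 2 := by
  set x := qpMinimizer price ε cap c
  set xhat := qpMinimizer price ε cap chat
  have hsplit : qpObjective price ε xhat c - qpObjective price ε x c
      = (qpObjective price ε xhat chat - qpObjective price ε x chat) + (c - chat) * (x - xhat) := by
    unfold qpObjective
    ring
  obtain ⟨hx₀, hx⟩ := qpMinimizer_mem_Icc price ε c hcap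
  have hxhat_min : qpObjective price ε xhat chat ≤ qpObjective price ε x chat :=
    qpObjective_qpMinimizer_le hprice hε hx₀ hx
  have hcross : (c - chat) * (x - xhat) ≤ ε / (2 * price) * (c - chat) ^ 2 :=
    calc (c - chat) * (x - xhat) ≤ |c - chat| * |x - xhat| := by rw [← abs_mul]; exact le_abs_self _
      _ ≤ |c - chat| * (ε / (2 * price) * |c - chat|) := by
        gcongr
        exact abs_qpMinimizer_sub_le hprice.le hε.le cap c chat
      _ = ε / (2 * price) * (c - chat) ^ 2 := by rw [← sq_abs (c - chat)]; ring
  linarith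

theorem abs_qpObjective_qpMinimizer_loss_le {price ε cap c chat p₀ δ : ℝ} (hp₀ : 0 < p₀)
    (hprice : p₀ ≤ price) (hε : 0 < ε) (hcap : 0 ≤ cap) (hδ : |c - chat| ≤ δ) :
    |qpObjective price ε (qpMinimizer price ε cap chat) c
        - qpObjective price ε (qpMinimizer price ε cap c) c|
      ≤ ε / (2 * p₀) * δ ^ 2 := by
  have hprice_pos : 0 < price := hp₀.trans_le hprice
  obtain ⟨hxhat₀, hxhat⟩ := qpMinimizer_mem_Icc price ε chat hcap
  rw [abs_of_nonneg (sub_nonneg.mpr (qpObjective_qpMinimizer_le hprice_pos hε hxhat₀ hxhat))]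
  calc _ ≤ ε / (2 * price) * (c - chat) ^ 2 :=
        qpObjective_qpMinimizer_loss_le hprice_pos hε hcap c chat
    _ = ε / (2 * price) * |c - chat| ^ 2 := by rw [sq_abs]
    _ ≤ ε / (2 * p₀) * δ ^ 2 := by gcongr

theorem abs_sum_qpObjective_qpMinimizer_loss_le {ι : Type*} (S : Finset ι) {M : ℕ}
    (hS : S.card ≤ M) (price cap c chat : ι → ℝ) {ε p₀ δ : ℝ} (hε : 0 < ε) (hp₀ : 0 < p₀)
    (hprice : ∀ j ∈ S, p₀ ≤ price j) (hcap : ∀ j ∈ S, 0 ≤ cap j)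
    (hc : ∀ j ∈ S, |c j - chat j| ≤ δ) :
    |∑ j ∈ S, qpObjective (price j) ε (qpMinimizer (price j) ε (cap j) (chat j)) (c j)
        - ∑ j ∈ S, qpObjective (price j) ε (qpMinimizer (price j) ε (cap j) (c j)) (c j)|
      ≤ M * (ε / (2 * p₀) * δ ^ 2) := by
  rw [← sum_sub_distrib]
  calc _ ≤ ∑ j ∈ S, |qpObjective (price j) ε (qpMinimizer (price j) ε (cap j) (chat j)) (c j)
          - qpObjective (price j) ε (qpMinimizer (price j) ε (cap j) (c j)) (c j)| :=
        abs_sum_le_sum_abs _ _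
    _ ≤ S.card • (ε / (2 * p₀) * δ ^ 2) := sum_le_card_nsmul _ _ _ fun j hj ↦
        abs_qpObjective_qpMinimizer_loss_le hp₀ (hprice j hj) hε (hcap j hj) (hc j hj)
    _ ≤ M * (ε / (2 * p₀) * δ ^ 2) := by
        rw [nsmul_eq_mul]
        gcongr

theorem abs_add_add_sub_sub_sub_le (a₁ a₂ a₃ b₁ b₂ b₃ : ℝ) :
    |a₁ + a₂ + a₃ - b₁ - b₂ - b₃| ≤ |a₁ - b₁| + |a₂ - b₂| + |a₃ - b₃| := by
  have hsplit : a₁ + a₂ + a₃ - b₁ - b₂ - b₃ = (a₁ - b₁) + (a₂ - b₂) + (a₃ - b₃) := by ring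
  rw [hsplit]
  exact abs_add_three _ _ _

theorem two_timescale_total_optimality_loss_general
    {ι₁ ι₂ ι₃ : Type*}
    (ε : ℝ) (hε : 0 < ε)
    (TΔ : ℕ) (M : ℕ)
    (ωQ ωq : ℝ)
    (α₀ β₀ : ℝ) (hα₀ : 0 < α₀) (hβ₀ : 0 < β₀)
    (S₁ : Finset ι₁) (S₂ : Finset ι₂) (S₃ : Finset ι₃)
    (hS₁ : S₁.card ≤ M) (hS₂ : S₂.card ≤ M) (hS₃ : S₃.card ≤ M)
    (α : ι₁ → ℝ) (P : ι₁ → ℝ) (c₁ c₁hat : ι₁ → ℝ)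
    (hα : ∀ j ∈ S₁, α₀ ≤ α j) (hP : ∀ j ∈ S₁, 0 < P j)
    (hc₁ : ∀ j ∈ S₁, |c₁ j - c₁hat j| ≤ (TΔ : ℝ) * (ωQ + ωq))
    (β₂ : ι₂ → ℝ) (L₂ : ι₂ → ℝ) (c₂ c₂hat : ι₂ → ℝ)
    (hβ₂ : ∀ j ∈ S₂, β₀ ≤ β₂ j) (hL₂ : ∀ j ∈ S₂, 0 < L₂ j)
    (hc₂ : ∀ j ∈ S₂, |c₂ j - c₂hat j| ≤ 2 * (TΔ : ℝ) * ωQ)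
    (β₃ : ι₃ → ℝ) (L₃ : ι₃ → ℝ) (c₃ c₃hat : ι₃ → ℝ)
    (hβ₃ : ∀ j ∈ S₃, β₀ ≤ β₃ j) (hL₃ : ∀ j ∈ S₃, 0 < L₃ j)
    (hc₃ : ∀ j ∈ S₃, |c₃ j - c₃hat j| ≤ (TΔ : ℝ) * (ωQ + ωq)) :
    |(∑ j ∈ S₁, qpObjective (α j) ε (qpMinimizer (α j) ε (P j) (c₁hat j)) (c₁ j))
      + (∑ j ∈ S₂, qpObjective (β₂ j) ε (qpMinimizer (β₂ j) ε (L₂ j) (c₂hat j)) (c₂ j))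
      + (∑ j ∈ S₃, qpObjective (β₃ j) ε (qpMinimizer (β₃ j) ε (L₃ j) (c₃hat j)) (c₃ j))
      - (∑ j ∈ S₁, qpObjective (α j) ε (qpMinimizer (α j) ε (P j) (c₁ j)) (c₁ j))
      - (∑ j ∈ S₂, qpObjective (β₂ j) ε (qpMinimizer (β₂ j) ε (L₂ j) (c₂ j)) (c₂ j))
      - (∑ j ∈ S₃, qpObjective (β₃ j) ε (qpMinimizer (β₃ j) ε (L₃ j) (c₃ j)) (c₃ j))|
      ≤ ε * (TΔ : ℝ) ^ 2 * (M : ℝ)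
          * ((1 / (2 * α₀) + 1 / (2 * β₀)) * (ωQ + ωq) ^ 2 + (2 / β₀) * ωQ ^ 2) := by
  have hloss₁ := abs_sum_qpObjective_qpMinimizer_loss_le S₁ hS₁ α P c₁ c₁hat hε hα₀ hα
    (fun j hj ↦ (hP j hj).le) hc₁
  have hloss₂ := abs_sum_qpObjective_qpMinimizer_loss_le S₂ hS₂ β₂ L₂ c₂ c₂hat hε hβ₀ hβ₂
    (fun j hj ↦ (hL₂ j hj).le) hc₂
  have hloss₃ := abs_sum_qpObjective_qpMinimizer_loss_le S₃ hS₃ β₃ L₃ c₃ c₃hat hε hβ₀ hβ₃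
    (fun j hj ↦ (hL₃ j hj).le) hc₃
  refine (abs_add_add_sub_sub_sub_le _ _ _ _ _ _).trans <|
    (add_le_add_three hloss₁ hloss₂ hloss₃).trans (le_of_eq ?_)
  field_simp
  ring

/-- Theorem 2 (aggregate form): the total optimality loss of the per-slot
decomposed objective `∑(f₁ + f₂ + f₃)`, when the queue backlogs used in the
decisions are replaced by their window-start approximations, is at most
`ε·C` with `C = TΔ²·M·[(1/(2α₀) + 1/(2β₀))·(ωQ + ωq)² + (2/β₀)·ωQ²]`. -/
theorem two_timescale_total_optimality_loss
    {ι₁ ι₂ ι₃ : Type*}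
    (ε : ℝ) (hε : 0 < ε)
    (TΔ : ℕ) (hTΔ : 0 < TΔ) (M : ℕ)
    (ωQ ωq : ℝ) (hωQ : 0 ≤ ωQ) (hωq : 0 ≤ ωq)
    (α₀ β₀ : ℝ) (hα₀ : 0 < α₀) (hβ₀ : 0 < β₀)
    (S₁ : Finset ι₁) (S₂ : Finset ι₂) (S₃ : Finset ι₃)
    (hS₁ : S₁.card ≤ M) (hS₂ : S₂.card ≤ M) (hS₃ : S₃.card ≤ M)
    (α : ι₁ → ℝ) (P : ι₁ → ℝ) (c₁ c₁hat : ι₁ → ℝ)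
    (hα : ∀ j ∈ S₁, α₀ ≤ α j) (hP : ∀ j ∈ S₁, 0 < P j)
    (hc₁ : ∀ j ∈ S₁, |c₁ j - c₁hat j| ≤ (TΔ : ℝ) * (ωQ + ωq))
    (β₂ : ι₂ → ℝ) (L₂ : ι₂ → ℝ) (c₂ c₂hat : ι₂ → ℝ)
    (hβ₂ : ∀ j ∈ S₂, β₀ ≤ β₂ j) (hL₂ : ∀ j ∈ S₂, 0 < L₂ j)
    (hc₂ : ∀ j ∈ S₂, |c₂ j - c₂hat j| ≤ 2 * (TΔ : ℝ) * ωQ)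
    (β₃ : ι₃ → ℝ) (L₃ : ι₃ → ℝ) (c₃ c₃hat : ι₃ → ℝ)
    (hβ₃ : ∀ j ∈ S₃, β₀ ≤ β₃ j) (hL₃ : ∀ j ∈ S₃, 0 < L₃ j)
    (hc₃ : ∀ j ∈ S₃, |c₃ j - c₃hat j| ≤ (TΔ : ℝ) * (ωQ + ωq)) :
    |(∑ j ∈ S₁, qpObjective (α j) ε (qpMinimizer (α j) ε (P j) (c₁hat j)) (c₁ j))
      + (∑ j ∈ S₂, qpObjective (β₂ j) ε (qpMinimizer (β₂ j) ε (L₂ j) (c₂hat j)) (c₂ j))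
      + (∑ j ∈ S₃, qpObjective (β₃ j) ε (qpMinimizer (β₃ j) ε (L₃ j) (c₃hat j)) (c₃ j))
      - (∑ j ∈ S₁, qpObjective (α j) ε (qpMinimizer (α j) ε (P j) (c₁ j)) (c₁ j))
      - (∑ j ∈ S₂, qpObjective (β₂ j) ε (qpMinimizer (β₂ j) ε (L₂ j) (c₂ j)) (c₂ j))
      - (∑ j ∈ S₃, qpObjective (β₃ j) ε (qpMinimizer (β₃ j) ε (L₃ j) (c₃ j)) (c₃ j))|
      ≤ ε * (TΔ : ℝ) ^ 2 * (M : ℝ)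
          * ((1 / (2 * α₀) + 1 / (2 * β₀)) * (ωQ + ωq) ^ 2 + (2 / β₀) * ωQ ^ 2) :=
  two_timescale_total_optimality_loss_general ε hε TΔ M ωQ ωq α₀ β₀ hα₀ hβ₀ S₁ S₂ S₃ hS₁ hS₂ hS₃ α P
    c₁ c₁hat hα hP hc₁ β₂ L₂ c₂ c₂hat hβ₂ hL₂ hc₂ β₃ L₃ c₃ c₃hat hβ₃ hL₃ hc₃
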